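/- arXiv:1904.06638 — 6 statements merged into one kernel-verified Lean document; each statement's English description precedes it below -/
import Mathlib

section
/- Every element α of the semigroup 𝐈ℕ∞ of partial cofinite isometries of ℕ is a monotone partial bijection of the linearly ordered set (ℕ, ≤); moreover, α is the restriction of a translation of the integers to a cofinite subset of ℕ, i.e. there exists an integer z_α such that α(n) = n + z_α for every n in the domain of α. -/
/-- Partial transformations of the set ℕ of positive integers. -/
abbrev PMapN : Type := ℕ+ → Option ℕ+

/-- The domain of a partial transformation. -/
def pdom (f : PMapN) : Set ℕ+ := {n | f n ≠ none}

/-- The range of a partial transformation. -/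
def pran (f : PMapN) : Set ℕ+ := {m | ∃ n, f n = some m}

/-- Composition of partial transformations: `pmul f g` applies `g` first and then `f`. -/
def pmul (f g : PMapN) : PMapN := fun n => (g n).bind f

/-- The identity transformation 𝕀 of ℕ. -/
def pid : PMapN := fun n => some n

/-- `f` is a partial bijection (an injective partial map). -/
def IsPartialBij (f : PMapN) : Prop :=
  ∀ ⦃m n a⦄, f m = some a → f n = some a → m = n

/-- `f` is a partial isometry with respect to the metric `d(m, n) = |m - n|`. -/
def IsIsometry (f : PMapN) : Prop :=
  ∀ ⦃m n a b⦄, f m = some a → f n = some b →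
    |((a : ℕ) : ℤ) - ((b : ℕ) : ℤ)| = |((m : ℕ) : ℤ) - ((n : ℕ) : ℤ)|

/-- Membership in the inverse monoid `𝐈ℕ∞` of partial cofinite isometries of ℕ:
a partial bijection of ℕ with cofinite domain and cofinite range preserving distances. -/
def InIN (f : PMapN) : Prop :=
  IsPartialBij f ∧ (pdom f)ᶜ.Finite ∧ (pran f)ᶜ.Finite ∧ IsIsometry f

/-- Every element `α` of `𝐈ℕ∞` is a monotone partial bijection of the
linearly ordered set `(ℕ, ≤)`; moreover, `α` is the restriction of a translation of the
integers: there is an integer `z` with `α(n) = n + z` for every `n ∈ dom α`. -/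
theorem stmt0 (α : PMapN) (hα : InIN α) :
    (∀ ⦃m n a b⦄, α m = some a → α n = some b → m ≤ n → a ≤ b) ∧
    ∃ z : ℤ, ∀ ⦃n a⦄, α n = some a → ((a : ℕ) : ℤ) = ((n : ℕ) : ℤ) + z := by
  obtain ⟨hbij, hdom, hran, hiso⟩ := hα
  have hinf : (pdom α).Infinite := by simpa using hdom.infinite_compl
  obtain ⟨m, hm, n, hn, hmn⟩ := hinf.nontrivial
  obtain ⟨a, ha⟩ := Option.ne_none_iff_exists'.mp hm
  obtain ⟨b, hb⟩ := Option.ne_none_iff_exists'.mp hn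
  have hmnZ : ((m : ℕ) : ℤ) ≠ ((n : ℕ) : ℤ) := by
    simpa using hmn
  have hab := hiso ha hb
  have key : ∃ z : ℤ, ∀ ⦃k c⦄, α k = some c → ((c : ℕ) : ℤ) = ((k : ℕ) : ℤ) + z := by
    rcases abs_eq_abs.mp hab with h | h
    · refine ⟨((a : ℕ) : ℤ) - ((m : ℕ) : ℤ), ?_⟩
      intro k c hk
      have h1 := hiso hk ha
      have h2 := hiso hk hb
      rcases abs_eq_abs.mp h1 with h1 | h1 <;> rcases abs_eq_abs.mp h2 with h2 | h2 <;> omega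
    · exfalso
      have key2 : ∀ ⦃k c⦄, α k = some c →
          ((c : ℕ) : ℤ) = ((a : ℕ) : ℤ) + ((m : ℕ) : ℤ) - ((k : ℕ) : ℤ) := by
        intro k c hk
        have h1 := hiso hk ha
        have h2 := hiso hk hb
        rcases abs_eq_abs.mp h1 with h1 | h1 <;> rcases abs_eq_abs.mp h2 with h2 | h2 <;> omega
      obtain ⟨k, hk, hklt⟩ := hinf.exists_gt (a + m)
      obtain ⟨c, hc⟩ := Option.ne_none_iff_exists'.mp hk
      have hck := key2 hc
      have hc1 : (1 : ℤ) ≤ ((c : ℕ) : ℤ) := by exact_mod_cast c.one_le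
      have hkZ : ((a : ℕ) : ℤ) + ((m : ℕ) : ℤ) < ((k : ℕ) : ℤ) := by
        have : ((a + m : ℕ+) : ℕ) < (k : ℕ) := by exact_mod_cast hklt
        push_cast at this ⊢
        omega
      omega
  obtain ⟨z, hz⟩ := key
  refine ⟨?_, z, hz⟩
  intro m' n' a' b' ha' hb' hle
  have h1 := hz ha'
  have h2 := hz hb'
  have hle' : ((m' : ℕ) : ℤ) ≤ ((n' : ℕ) : ℤ) := by exact_mod_cast hle
  have : ((a' : ℕ) : ℤ) ≤ ((b' : ℕ) : ℤ) := by omega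
  exact_mod_cast this
end

section
/- Green's relation 𝓗 on the semigroup 𝐈ℕ∞ is trivial: for α, β ∈ 𝐈ℕ∞, α 𝓗 β if and only if α = β. -/
/-- Green's relation 𝓛 on the monoid `𝐈ℕ∞`. -/
def GreenL (a b : PMapN) : Prop :=
  (∃ u, InIN u ∧ pmul u a = b) ∧ (∃ v, InIN v ∧ pmul v b = a)

/-- Green's relation 𝓡 on the monoid `𝐈ℕ∞`. -/
def GreenR (a b : PMapN) : Prop :=
  (∃ u, InIN u ∧ pmul a u = b) ∧ (∃ v, InIN v ∧ pmul b v = a)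

/-- Green's relation 𝓗 is the intersection of 𝓛 and 𝓡. -/
def GreenH (a b : PMapN) : Prop := GreenL a b ∧ GreenR a b

/-! An isometry of ℕ with infinite domain has no room to reflect: comparing two points with a
far-away point of the domain shows that it is a translation `n ↦ n + c`. Two such translations
with the same domain and the same range send the least point of the domain to the least point of
the range, so they have the same shift and coincide. Since `𝓛`-related elements have the same
domain and `𝓡`-related ones the same range, `𝓗` is trivial. -/

def IsTranslation (f : PMapN) : Prop :=
  ∀ ⦃m n a b⦄, f m = some a → f n = some b →
    ((a : ℕ) : ℤ) - ((b : ℕ) : ℤ) = ((m : ℕ) : ℤ) - ((n : ℕ) : ℤ)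

lemma IsIsometry.isTranslation {f : PMapN} (hf : IsIsometry f) (hdom : (pdom f).Infinite) :
    IsTranslation f := by
  intro m n a b hm hn
  obtain ⟨k, hk, hk_gt⟩ := hdom.exists_gt (m + a + n + b)
  obtain ⟨c, hc⟩ := Option.ne_none_iff_exists'.mp hk
  have hk_gt' : ((m : ℕ) : ℤ) + a + n + b < ((k : ℕ) : ℤ) := by
    have := (PNat.coe_lt_coe _ _).mpr hk_gt
    push_cast at this ⊢
    omega
  have hc_pos : (0 : ℤ) < ((c : ℕ) : ℤ) := by exact_mod_cast c.pos
  -- `c = a - (k - m)` would put `c` below `1`, so both distances to `c` are positive differences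
  have dist_a := abs_eq_abs.mp (hf hc hm)
  have dist_b := abs_eq_abs.mp (hf hc hn)
  omega

lemma InIN.isTranslation {f : PMapN} (hf : InIN f) : IsTranslation f :=
  hf.2.2.2.isTranslation (Set.infinite_of_finite_compl hf.2.1)

lemma IsTranslation.le_of_mem_pran {f : PMapN} (hf : IsTranslation f) {n₀ a₀ a : ℕ+}
    (hmin : ∀ n ∈ pdom f, n₀ ≤ n) (h₀ : f n₀ = some a₀) (ha : a ∈ pran f) : a₀ ≤ a := by
  obtain ⟨n, hn⟩ := ha
  have hn₀ : n₀ ≤ n := hmin n (by simp [pdom, hn])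
  have := hf hn h₀
  rw [← PNat.coe_le_coe] at hn₀ ⊢
  omega

lemma IsTranslation.eq_of_pdom_eq_of_pran_eq {f g : PMapN} (hf : IsTranslation f)
    (hg : IsTranslation g) (hne : (pdom f).Nonempty) (hdom : pdom f = pdom g)
    (hran : pran f = pran g) : f = g := by
  obtain ⟨n₀, hn₀, hmin⟩ := WellFounded.has_min wellFounded_lt _ hne
  replace hmin : ∀ n ∈ pdom f, n₀ ≤ n := fun n hn => not_lt.mp (hmin n hn)
  obtain ⟨a₀, ha₀⟩ := Option.ne_none_iff_exists'.mp hn₀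
  obtain ⟨b₀, hb₀⟩ := Option.ne_none_iff_exists'.mp (show n₀ ∈ pdom g from hdom ▸ hn₀)
  have hab₀ : a₀ = b₀ := le_antisymm
    (hf.le_of_mem_pran hmin ha₀ (hran ▸ ⟨n₀, hb₀⟩))
    (hg.le_of_mem_pran (hdom ▸ hmin) hb₀ (hran ▸ ⟨n₀, ha₀⟩))
  funext n
  by_cases hn : n ∈ pdom f
  · obtain ⟨a, ha⟩ := Option.ne_none_iff_exists'.mp hn
    obtain ⟨b, hb⟩ := Option.ne_none_iff_exists'.mp (show n ∈ pdom g from hdom ▸ hn)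
    have hfa := hf ha ha₀
    have hgb := hg hb hb₀
    subst hab₀
    rw [ha, hb, Option.some_inj, ← PNat.coe_inj]
    omega
  · have hn' : n ∉ pdom g := hdom ▸ hn
    rw [not_not.mp hn, not_not.mp hn']

lemma pdom_pmul_subset (f g : PMapN) : pdom (pmul f g) ⊆ pdom g := by
  intro n hn h
  simp [pdom, pmul, h] at hn

lemma pran_pmul_subset (f g : PMapN) : pran (pmul f g) ⊆ pran f := by
  rintro a ⟨n, hn⟩
  cases h : g n with
  | none => simp [pmul, h] at hn
  | some k => exact ⟨k, by simpa [pmul, h] using hn⟩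

lemma GreenL.pdom_eq {a b : PMapN} (h : GreenL a b) : pdom a = pdom b := by
  obtain ⟨⟨u, -, rfl⟩, ⟨v, -, hv⟩⟩ := h
  exact (hv ▸ pdom_pmul_subset v (pmul u a)).antisymm (pdom_pmul_subset u a)

lemma GreenR.pran_eq {a b : PMapN} (h : GreenR a b) : pran a = pran b := by
  obtain ⟨⟨u, -, rfl⟩, ⟨v, -, hv⟩⟩ := h
  exact (hv ▸ pran_pmul_subset (pmul a u) v).antisymm (pran_pmul_subset a u)

lemma inIN_pid : InIN pid := by
  refine ⟨fun m n a hm hn => ?_, ?_, ?_, fun m n a b hm hn => ?_⟩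
  · simp only [pid, Option.some.injEq] at hm hn
    rw [hm, hn]
  · simp [pdom, pid]
  · simp [pran, pid]
  · simp only [pid, Option.some.injEq] at hm hn
    rw [hm, hn]

lemma pmul_pid (f : PMapN) : pmul f pid = f := rfl

lemma pid_pmul (f : PMapN) : pmul pid f = f :=
  funext fun n => Option.bind_fun_some (f n)

lemma greenH_refl (a : PMapN) : GreenH a a :=
  ⟨⟨⟨pid, inIN_pid, pid_pmul a⟩, ⟨pid, inIN_pid, pid_pmul a⟩⟩,
    ⟨⟨pid, inIN_pid, pmul_pid a⟩, ⟨pid, inIN_pid, pmul_pid a⟩⟩⟩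

/-- Green's relation 𝓗 on `𝐈ℕ∞` is trivial: for `α, β ∈ 𝐈ℕ∞`,
`α 𝓗 β` if and only if `α = β`. -/
theorem stmt7 (α β : PMapN) (hα : InIN α) (hβ : InIN β) :
    GreenH α β ↔ α = β := by
  refine ⟨fun ⟨hL, hR⟩ => ?_, fun h => h ▸ greenH_refl α⟩
  exact hα.isTranslation.eq_of_pdom_eq_of_pran_eq hβ.isTranslation
    (Set.infinite_of_finite_compl hα.2.1).nonempty hL.pdom_eq hR.pran_eq
end

section
/- The semigroup 𝐈ℕ∞ is simple: it contains no proper two-sided ideals; equivalently, for any elements α and β of 𝐈ℕ∞ there exist γ, δ ∈ 𝐈ℕ∞ such that γαδ = β. -/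
/-
Every `α ∈ 𝐈ℕ∞` is eventually a translation: beyond the finitely many gaps of its domain it is
an isometric embedding of a ray of ℕ into ℕ, which must be `n ↦ n + c` since a decreasing one
would leave ℕ. So `α (n + N) = n + M` for all `n`, and then `γ α δ = β` with `δ : n ↦ n + N` and
`γ = β ∘ (m ↦ m - M, defined for m > M)`; both lie in `𝐈ℕ∞` because `𝐈ℕ∞` is closed under
composition. Hence any ideal containing some `α` contains every `β = γ α δ`.
-/

lemma IsPartialBij.finite_preimage_some {g : PMapN} (hg : IsPartialBij g) {s : Set ℕ+}
    (hs : s.Finite) : (g ⁻¹' (some '' s)).Finite := by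
  refine (hs.image some).preimage ?_
  rintro m ⟨a, -, ha⟩ n - hmn
  exact hg ha.symm (hmn ▸ ha.symm)

lemma IsPartialBij.pmul {f g : PMapN} (hf : IsPartialBij f) (hg : IsPartialBij g) :
    IsPartialBij (pmul f g) := by
  intro m n c hm hn
  obtain ⟨a, hga, hfa⟩ := Option.bind_eq_some_iff.mp hm
  obtain ⟨b, hgb, hfb⟩ := Option.bind_eq_some_iff.mp hn
  exact hg hga (hf hfa hfb ▸ hgb)

lemma IsIsometry.pmul {f g : PMapN} (hf : IsIsometry f) (hg : IsIsometry g) :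
    IsIsometry (pmul f g) := by
  intro m n c d hm hn
  obtain ⟨a, hga, hfa⟩ := Option.bind_eq_some_iff.mp hm
  obtain ⟨b, hgb, hfb⟩ := Option.bind_eq_some_iff.mp hn
  exact (hf hfa hfb).trans (hg hga hgb)

lemma compl_pdom_pmul_subset (f g : PMapN) :
    (pdom (pmul f g))ᶜ ⊆ (pdom g)ᶜ ∪ g ⁻¹' (some '' (pdom f)ᶜ) := by
  intro n hn
  simp only [pdom, pmul, Set.mem_compl_iff, Set.mem_ofPred_eq, not_not] at hn
  cases hgn : g n with
  | none => exact Or.inl (by simp [pdom, hgn])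
  | some a => exact Or.inr ⟨a, by simpa [pdom, hgn] using hn, hgn.symm⟩

lemma compl_pran_pmul_subset (f g : PMapN) :
    (pran (pmul f g))ᶜ ⊆ (pran f)ᶜ ∪ some ⁻¹' (f '' (pran g)ᶜ) := by
  rintro c hc
  by_cases hcf : c ∈ pran f
  · obtain ⟨a, hfa⟩ := hcf
    refine Or.inr ⟨a, fun ⟨n, hgn⟩ => hc ⟨n, ?_⟩, hfa⟩
    simp [pmul, hgn, hfa]
  · exact Or.inl hcf

lemma InIN.pmul {f g : PMapN} (hf : InIN f) (hg : InIN g) : InIN (pmul f g) :=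
  ⟨hf.1.pmul hg.1,
    ((hg.2.1.union (hg.1.finite_preimage_some hf.2.1)).subset (compl_pdom_pmul_subset f g)),
    ((hf.2.2.1.union ((hg.2.2.1.image f).preimage (Option.some_injective _).injOn)).subset
      (compl_pran_pmul_subset f g)),
    hf.2.2.2.pmul hg.2.2.2⟩

def shift (k : ℕ+) : PMapN := fun n => some (n + k)

def unshift (k : ℕ+) : PMapN := fun m => if k < m then some (m - k) else none

lemma unshift_add (k n : ℕ+) : unshift k (n + k) = some n := by
  simp [unshift, PNat.lt_add_left, PNat.add_sub]

lemma inIN_shift (k : ℕ+) : InIN (shift k) := by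
  refine ⟨fun m n a hm hn => ?_, ?_, ?_, fun m n a b hm hn => ?_⟩
  · simp only [shift, Option.some.injEq] at hm hn
    exact add_right_cancel (hm.trans hn.symm)
  · simp [pdom, shift]
  · refine (Set.finite_Iic k).subset fun m hm => ?_
    by_contra hkm
    exact hm ⟨m - k, by simp [shift, PNat.sub_add_of_lt (not_le.mp hkm)]⟩
  · simp only [shift, Option.some.injEq] at hm hn
    subst hm hn
    simp only [PNat.add_coe]
    congr 1
    push_cast
    ring

lemma unshift_eq_some {k m n : ℕ+} (h : unshift k m = some n) : m = n + k := by
  unfold unshift at h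
  split_ifs at h with hkm
  exact (Option.some.inj h ▸ PNat.sub_add_of_lt hkm).symm

lemma inIN_unshift (k : ℕ+) : InIN (unshift k) := by
  refine ⟨fun m n a hm hn => ?_, ?_, ?_, fun m n a b hm hn => ?_⟩
  · rw [unshift_eq_some hm, unshift_eq_some hn]
  · refine (Set.finite_Iic k).subset fun m hm => ?_
    by_contra hkm
    rw [Set.mem_Iic, not_le] at hkm
    exact hm (by simp [pdom, unshift, hkm])
  · have hran : pran (unshift k) = Set.univ :=
      Set.eq_univ_of_forall fun n => ⟨n + k, unshift_add k n⟩
    simp [hran]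
  · rw [unshift_eq_some hm, unshift_eq_some hn]
    simp only [PNat.add_coe]
    congr 1
    push_cast
    ring

lemma eq_add_of_abs_sub_eq_of_nonneg {g : ℕ → ℤ} (hg : ∀ i j : ℕ, |g i - g j| = |(i : ℤ) - j|)
    (hnonneg : ∀ i, 0 ≤ g i) (i : ℕ) : g i = g 0 + i := by
  -- `g i - g 0 = ±i` and `g i - g 1 = ±(i - 1)` are compatible only with equal signs
  have hlin : ∀ i : ℕ, g i = g 0 + i * (g 1 - g 0) := by
    intro i
    have hi0 := hg i 0
    have hi1 := hg i 1
    have h10 := hg 1 0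
    rw [abs_eq_abs] at hi0 hi1 h10
    push_cast at hi0 hi1 h10
    rcases hi0 with hi0 | hi0 <;> rcases hi1 with hi1 | hi1 <;> rcases h10 with h10 | h10 <;>
      nlinarith
  have hstep : g 1 - g 0 = 1 := by
    have h10 := hg 1 0
    rw [abs_eq_abs] at h10
    push_cast at h10
    rcases h10 with h10 | h10
    · linarith
    · have hj : (((g 0).toNat + 1 : ℕ) : ℤ) = g 0 + 1 := by
        have := hnonneg 0
        omega
      have hgj := hlin ((g 0).toNat + 1)
      rw [hj, h10] at hgj
      linarith [hnonneg ((g 0).toNat + 1)]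
  rw [hlin i, hstep, mul_one]

lemma InIN.exists_apply_add_eq_add {α : PMapN} (hα : InIN α) :
    ∃ N M : ℕ+, ∀ n : ℕ+, α (n + N) = some (n + M) := by
  obtain ⟨B, hB⟩ := hα.2.1.bddAbove
  have hdefined : ∀ k : ℕ, ∃ a, α (k.succPNat + B) = some a := fun k =>
    Option.ne_none_iff_exists'.mp fun hnone =>
      (PNat.lt_add_left B k.succPNat).not_ge (hB fun hdom => hdom hnone)
  choose v hv using hdefined
  have hv_add : ∀ k : ℕ, ((v k : ℕ) : ℤ) = (v 0 : ℕ) + k := by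
    refine eq_add_of_abs_sub_eq_of_nonneg (g := fun k => ((v k : ℕ) : ℤ)) (fun i j => ?_)
      fun i => by positivity
    rw [hα.2.2.2 (hv i) (hv j)]
    simp only [PNat.add_coe, Nat.succPNat_coe]
    congr 1
    push_cast
    ring
  refine ⟨1 + B, v 0, fun n => ?_⟩
  have hn : n + (1 + B) = (n : ℕ).succPNat + B := by
    apply PNat.eq
    simp only [PNat.add_coe, Nat.succPNat_coe, PNat.one_coe]
    omega
  rw [hn, hv]
  congr 1
  apply PNat.eq
  have := hv_add n
  simp only [PNat.add_coe]
  omega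

lemma exists_pmul_pmul_eq {α β : PMapN} (hα : InIN α) (hβ : InIN β) :
    ∃ γ δ, InIN γ ∧ InIN δ ∧ pmul (pmul γ α) δ = β := by
  obtain ⟨N, M, hα_add⟩ := hα.exists_apply_add_eq_add
  refine ⟨pmul β (unshift M), shift N, hβ.pmul (inIN_unshift M), inIN_shift N, funext fun n => ?_⟩
  simp only [pmul, shift, Option.bind_some, hα_add, unshift_add]

/-- The semigroup `𝐈ℕ∞` is simple: it has no proper two-sided ideals;
equivalently, for any `α, β ∈ 𝐈ℕ∞` there exist `γ, δ ∈ 𝐈ℕ∞` with `γαδ = β`. -/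
theorem stmt9 :
    (∀ I : Set PMapN, (∀ f ∈ I, InIN f) → I.Nonempty →
        (∀ f ∈ I, ∀ g, InIN g → pmul f g ∈ I ∧ pmul g f ∈ I) →
        ∀ f, InIN f → f ∈ I) ∧
    (∀ α β, InIN α → InIN β →
        ∃ γ δ, InIN γ ∧ InIN δ ∧ pmul (pmul γ α) δ = β) := by
  refine ⟨fun I hI ⟨f₀, hf₀⟩ hideal f hf => ?_, fun α β hα hβ => exists_pmul_pmul_eq hα hβ⟩
  obtain ⟨γ, δ, hγ, hδ, rfl⟩ := exists_pmul_pmul_eq (hI f₀ hf₀) hf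
  exact (hideal _ (hideal f₀ hf₀ γ hγ).2 δ hδ).1
end

section
/- The inverse semigroup 𝐈ℕ∞ is E-unitary: if ε is an idempotent of 𝐈ℕ∞, α ∈ 𝐈ℕ∞, and the product εα is an idempotent, then α itself is an idempotent. -/
/-- The inverse semigroup `𝐈ℕ∞` is E-unitary: if `ε` is an idempotent
of `𝐈ℕ∞`, `α ∈ 𝐈ℕ∞`, and the product `εα` is an idempotent, then `α` is an idempotent. -/
theorem stmt11 (ε α : PMapN) (hε : InIN ε) (hε2 : pmul ε ε = ε) (hα : InIN α)
    (h : pmul (pmul ε α) (pmul ε α) = pmul ε α) :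
    pmul α α = α := by
  obtain ⟨hεinj, hεd, -, -⟩ := hε
  obtain ⟨hαinj, hαd, -, hαiso⟩ := hα
  -- ε is a partial identity
  have hεid : ∀ n k : ℕ+, ε n = some k → k = n := by
    intro n k hk
    have h1 : pmul ε ε n = ε n := by rw [hε2]
    simp only [pmul] at h1
    simp only [hk, Option.bind_some] at h1
    -- h1 : ε k = some k
    exact hεinj h1 hk
  -- from β := pmul ε α idempotent: β n = some k → α n = some k and α k = some k
  have hβ : ∀ n k : ℕ+, pmul ε α n = some k → α n = some k := by
    intro n k hk
    simp only [pmul] at hk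
    rcases hj : α n with _ | j
    · rw [hj] at hk; simp at hk
    · rw [hj] at hk
      simp only [Option.bind_some] at hk
      have := hεid j k hk
      exact congrArg some this.symm
  have hid : ∀ n k : ℕ+, pmul ε α n = some k → k = n := by
    intro n k hk
    have h1 : (pmul ε α n).bind (pmul ε α) = pmul ε α n := congrFun h n
    rw [hk, Option.bind_some] at h1
    -- h1 : pmul ε α k = some k
    have h2 := hβ n k hk
    have h3 := hβ k k h1
    exact (hαinj h2 h3).symm
  -- if α n = some k and k ∈ dom ε then k = n
  have hS : ∀ n k : ℕ+, α n = some k → ε k ≠ none → k = n := by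
    intro n k hk hek
    rcases hj : ε k with _ | j
    · exact absurd hj hek
    · have hjk : j = k := hεid k j hj
      rw [hjk] at hj
      apply hid n k
      simp [pmul, hk, hj]
  -- S is the fixed-point set of α
  set S : Set ℕ+ := {m | α m = some m} with hSdef
  have hT : {m : ℕ+ | ∃ k, α m = some k ∧ ε k = none}.Finite := by
    apply Set.Finite.of_finite_image (f := fun m => (α m).getD 1)
    · apply hεd.subset
      rintro x ⟨m, ⟨k, hk, hek⟩, rfl⟩
      simp only [hk, Option.getD_some]
      simp [pdom, hek]
    · rintro m₁ ⟨k₁, hk₁, -⟩ m₂ ⟨k₂, hk₂, -⟩ hgd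
      simp only [hk₁, hk₂, Option.getD_some] at hgd
      subst hgd
      exact hαinj hk₁ hk₂
  have hScfin : Sᶜ.Finite := by
    apply (hαd.union hT).subset
    intro m hm
    rcases hk : α m with _ | k
    · exact Or.inl (by simp [pdom, hk])
    · rcases he : ε k with _ | j
      · exact Or.inr ⟨k, hk, he⟩
      · exfalso
        have : k = m := hS m k hk (by simp [he])
        exact hm (by rw [hSdef]; simpa [this] using hk)
  have hSinf : S.Infinite := by
    have := hScfin.infinite_compl
    rwa [compl_compl] at this
  -- every point of the domain of α is fixed
  have hfix : ∀ n k : ℕ+, α n = some k → k = n := by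
    intro n k hk
    obtain ⟨m, hmS, hmlt⟩ := hSinf.exists_gt (max n k)
    have hm : α m = some m := hmS
    have hiso := hαiso hk hm
    have h1 : (n : ℕ) < (m : ℕ) := by exact_mod_cast lt_of_le_of_lt (le_max_left n k) hmlt
    have h2 : (k : ℕ) < (m : ℕ) := by exact_mod_cast lt_of_le_of_lt (le_max_right n k) hmlt
    have := abs_eq_abs.mp hiso
    have hcast : (k : ℕ) = (n : ℕ) := by omega
    exact PNat.coe_injective hcast
  funext n
  rcases hk : α n with _ | k
  · simp [pmul, hk]
  · have : k = n := hfix n k hk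
    subst this
    simp [pmul, hk]
end

section
/- For elements α and β of the semigroup 𝐈ℕ∞ the following are equivalent: (i) there exists an idempotent ε ∈ 𝐈ℕ∞ with εα = εβ (i.e. α and β are equivalent under the least group congruence 𝔠_mg); (ii) there exists n ∈ dom α ∩ dom β with α(n) = β(n); (iii) α(n) = β(n) for all n ∈ dom α ∩ dom β. -/
/-!
Every `f ∈ 𝐈ℕ∞` is a translation `n ↦ n + c` on its domain: testing the isometry condition
against a point of the (cofinite) domain far beyond the given ones forces `f m - m = f n - n`.
Hence two elements agreeing at one common point agree on the whole common domain; conversely,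
if `α` and `β` agree there, the identity on `α`'s image of their agreement set is an
idempotent of `𝐈ℕ∞` equalising them, while `εα = εβ` for an injective cofinite `ε` forces
agreement at almost every common point of `dom α ∩ dom β`.
-/

open Filter

lemma mem_pdom_iff {f : PMapN} {n : ℕ+} : n ∈ pdom f ↔ ∃ a, f n = some a :=
  Option.ne_none_iff_exists'

lemma eventually_mem_pdom {f : PMapN} (hf : (pdom f)ᶜ.Finite) : ∀ᶠ n in cofinite, n ∈ pdom f :=
  mem_cofinite.2 hf

lemma IsPartialBij.finite_preimage_some_image {f : PMapN} (hf : IsPartialBij f)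
    {s : Set ℕ+} (hs : s.Finite) : (f ⁻¹' (some '' s)).Finite :=
  (hs.image some).preimage fun _ ⟨_, _, ha⟩ _ _ hmn => hf ha.symm (hmn ▸ ha.symm)

lemma IsIsometry.sub_eq_sub {f : PMapN} (hf : IsIsometry f) (hdom : (pdom f)ᶜ.Finite)
    {m n a b : ℕ+} (hm : f m = some a) (hn : f n = some b) :
    ((a : ℕ) : ℤ) - (m : ℕ) = ((b : ℕ) : ℤ) - (n : ℕ) := by
  have hlarge : ∀ᶠ p in cofinite, m + a + n + b < p :=
    eventually_cofinite.2 <| (Set.finite_Iic (m + a + n + b)).subset fun _ => le_of_not_gt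
  obtain ⟨p, hp, hlt⟩ := ((eventually_mem_pdom hdom).and hlarge).exists
  obtain ⟨q, hq⟩ := mem_pdom_iff.1 hp
  have hlt' : ((m : ℕ) : ℤ) + (a : ℕ) + (n : ℕ) + (b : ℕ) < (p : ℕ) := by
    exact_mod_cast (PNat.coe_lt_coe _ _).2 hlt
  have hq1 : (0 : ℤ) < (q : ℕ) := by exact_mod_cast q.pos
  -- `q` lies beyond `a` and `b`, else `|q - a| = p - m` would make `q` negative
  rcases abs_eq_abs.1 (hf hq hm) with h1 | h1 <;> rcases abs_eq_abs.1 (hf hq hn) with h2 | h2 <;>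
    omega

lemma InIN.apply_eq_apply_of_agree {α β : PMapN} (hα : InIN α) (hβ : InIN β) {n₀ : ℕ+} {a₀ : ℕ+}
    (hα₀ : α n₀ = some a₀) (hβ₀ : β n₀ = some a₀) {n : ℕ+} (hnα : n ∈ pdom α)
    (hnβ : n ∈ pdom β) : α n = β n := by
  obtain ⟨a, ha⟩ := mem_pdom_iff.1 hnα
  obtain ⟨b, hb⟩ := mem_pdom_iff.1 hnβ
  have hαs := hα.2.2.2.sub_eq_sub hα.2.1 ha hα₀
  have hβs := hβ.2.2.2.sub_eq_sub hβ.2.1 hb hβ₀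
  rw [ha, hb, PNat.coe_injective (by omega : (a : ℕ) = b)]

lemma exists_eq_of_pmul_eq {e α β : PMapN} (he : IsPartialBij e) (hedom : (pdom e)ᶜ.Finite)
    (hα : IsPartialBij α) (hαdom : (pdom α)ᶜ.Finite) (hβdom : (pdom β)ᶜ.Finite)
    (heq : pmul e α = pmul e β) : ∃ n a, α n = some a ∧ β n = some a := by
  have hαe : ∀ᶠ n in cofinite, n ∉ α ⁻¹' (some '' (pdom e)ᶜ) :=
    (hα.finite_preimage_some_image hedom).eventually_cofinite_notMem
  obtain ⟨n, ⟨hnα, hnβ⟩, hne⟩ :=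
    (((eventually_mem_pdom hαdom).and (eventually_mem_pdom hβdom)).and hαe).exists
  obtain ⟨a, ha⟩ := mem_pdom_iff.1 hnα
  obtain ⟨b, hb⟩ := mem_pdom_iff.1 hnβ
  have hae : a ∈ pdom e := by_contra fun h => hne ⟨a, h, ha.symm⟩
  obtain ⟨x, hx⟩ := mem_pdom_iff.1 hae
  have hexy : e a = e b := by simpa [pmul, ha, hb] using congrFun heq n
  exact ⟨n, a, ha, he hx (hexy ▸ hx) ▸ hb⟩

open scoped Classical in
noncomputable def pidOn (s : Set ℕ+) : PMapN := fun n => if n ∈ s then some n else none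

lemma pidOn_eq_some {s : Set ℕ+} {n a : ℕ+} : pidOn s n = some a ↔ n ∈ s ∧ n = a := by
  unfold pidOn; split_ifs <;> simp_all

lemma pdom_pidOn (s : Set ℕ+) : pdom (pidOn s) = s := by
  ext n; simp [pdom, pidOn]

lemma pran_pidOn (s : Set ℕ+) : pran (pidOn s) = s := by
  ext n; simp [pran, pidOn_eq_some]

lemma inIN_pidOn {s : Set ℕ+} (hs : sᶜ.Finite) : InIN (pidOn s) := by
  refine ⟨?_, by rwa [pdom_pidOn], by rwa [pran_pidOn], ?_⟩
  · intro m n a hm hn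
    rw [(pidOn_eq_some.1 hm).2, (pidOn_eq_some.1 hn).2]
  · intro m n a b hm hn
    rw [(pidOn_eq_some.1 hm).2, (pidOn_eq_some.1 hn).2]

lemma pmul_pidOn_self (s : Set ℕ+) : pmul (pidOn s) (pidOn s) = pidOn s := by
  funext n; unfold pmul pidOn; split_ifs <;> simp_all

def imageEqLocus (α β : PMapN) : Set ℕ+ := {m | ∃ k, α k = some m ∧ β k = some m}

lemma pmul_pidOn_imageEqLocus {α β : PMapN} (hα : IsPartialBij α) (hβ : IsPartialBij β) :
    pmul (pidOn (imageEqLocus α β)) α = pmul (pidOn (imageEqLocus α β)) β := by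
  funext n
  have hα' : ∀ a, α n = some a → (a ∈ imageEqLocus α β ↔ β n = some a) := fun a ha =>
    ⟨fun ⟨k, hk, hk'⟩ => hα hk ha ▸ hk', fun h => ⟨n, ha, h⟩⟩
  have hβ' : ∀ b, β n = some b → (b ∈ imageEqLocus α β ↔ α n = some b) := fun b hb =>
    ⟨fun ⟨k, hk, hk'⟩ => hβ hk' hb ▸ hk, fun h => ⟨n, h, hb⟩⟩
  rcases hA : α n with _ | a <;> rcases hB : β n with _ | b <;>
    simp_all [pmul, pidOn, eq_comm]

lemma compl_imageEqLocus_finite {α β : PMapN} (hαran : (pran α)ᶜ.Finite)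
    (hβdom : (pdom β)ᶜ.Finite) (h : ∀ n, n ∈ pdom α → n ∈ pdom β → α n = β n) :
    (imageEqLocus α β)ᶜ.Finite := by
  refine (hαran.union ((hβdom.image α).preimage (Option.some_injective _).injOn)).subset ?_
  intro m hm
  by_cases hran : m ∈ pran α
  · obtain ⟨k, hk⟩ := hran
    exact Or.inr ⟨k, fun hkβ => hm ⟨k, hk, h k (mem_pdom_iff.2 ⟨m, hk⟩) hkβ ▸ hk⟩, hk⟩
  · exact Or.inl hran

/-- For `α, β ∈ 𝐈ℕ∞` the following are equivalent:
(i) `εα = εβ` for some idempotent `ε ∈ 𝐈ℕ∞` (i.e. `α 𝔠_mg β` for the least group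
congruence `𝔠_mg`);
(ii) there exists `n ∈ dom α ∩ dom β` with `α(n) = β(n)`;
(iii) `α(n) = β(n)` for all `n ∈ dom α ∩ dom β`. -/
theorem stmt12 (α β : PMapN) (hα : InIN α) (hβ : InIN β) :
    List.TFAE [
      ∃ e, InIN e ∧ pmul e e = e ∧ pmul e α = pmul e β,
      ∃ n a, α n = some a ∧ β n = some a,
      ∀ n, n ∈ pdom α → n ∈ pdom β → α n = β n
    ] := by
  tfae_have 1 → 2 := fun ⟨_, he, _, heq⟩ =>
    exists_eq_of_pmul_eq he.1 he.2.1 hα.1 hα.2.1 hβ.2.1 heq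
  tfae_have 2 → 3 := fun ⟨_, _, hα₀, hβ₀⟩ _ => hα.apply_eq_apply_of_agree hβ hα₀ hβ₀
  tfae_have 3 → 1 := fun h =>
    ⟨pidOn (imageEqLocus α β), inIN_pidOn (compl_imageEqLocus_finite hα.2.2.1 hβ.2.1 h),
      pmul_pidOn_self _, pmul_pidOn_imageEqLocus hα.1 hβ.1⟩
  tfae_finish
end

section
/- The kernel of the homomorphism 𝔥 : 𝐈ℕ∞ → 𝒞_ℕ (sending each η to its restriction to the tail { n ∈ ℕ : n ≥ n_η^d }), i.e. the relation { (η, μ) : 𝔥(η) = 𝔥(μ) }, is a congruence on 𝐈ℕ∞ that is not a group congruence. -/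
/-- The partial translation `α₀ : n ↦ n + 1` with domain ℕ. -/
def alpha0 : PMapN := fun n => some (n + 1)

/-- The partial translation `β₀ : n ↦ n - 1` with domain `ℕ \ {1}`. -/
def beta0 : PMapN := fun n => if n = 1 then none else some (n - 1)

/-- Membership in the submonoid `𝒞_ℕ` of `𝐈ℕ∞` generated by `α₀` and `β₀`
(isomorphic to the bicyclic monoid). -/
inductive InC : PMapN → Prop
  | one : InC pid
  | base_a : InC alpha0
  | base_b : InC beta0
  | mul : ∀ f g, InC f → InC g → InC (pmul f g)

/-- The retraction `𝔥 : 𝐈ℕ∞ → 𝒞_ℕ` sending `η` to its restriction to the tail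
`{n : n ≥ n_η^d}`, where `n_η^d` is the least number such that every `n ≥ n_η^d`
lies in `dom η`. -/
noncomputable def hmap (η : PMapN) : PMapN := fun n =>
  if sInf {N : ℕ | ∀ m : ℕ+, N ≤ (m : ℕ) → η m ≠ none} ≤ (n : ℕ) then η n else none

/-- A congruence on the semigroup `𝐈ℕ∞`: an equivalence relation on its elements that is
compatible with multiplication on the left and on the right. -/
def IsCongr (r : PMapN → PMapN → Prop) : Prop :=
  (∀ f, InIN f → r f f) ∧
  (∀ f g, InIN f → InIN g → r f g → r g f) ∧
  (∀ f g h, InIN f → InIN g → InIN h → r f g → r g h → r f h) ∧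
  (∀ f g c, InIN f → InIN g → InIN c → r f g →
      r (pmul c f) (pmul c g) ∧ r (pmul f c) (pmul g c))

/-- A group congruence on `𝐈ℕ∞`: a congruence whose quotient semigroup is a group,
i.e. there is a group `G` and a multiplicative map `φ` of `𝐈ℕ∞` onto `G` whose kernel is
exactly the congruence. -/
def IsGroupCongr (r : PMapN → PMapN → Prop) : Prop :=
  IsCongr r ∧
  ∃ (G : Type) (_ : Group G) (φ : PMapN → G),
    (∀ f g, InIN f → InIN g → φ (pmul f g) = φ f * φ g) ∧
    (∀ x : G, ∃ f, InIN f ∧ φ f = x) ∧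
    (∀ f g, InIN f → InIN g → (r f g ↔ φ f = φ g))

/-!
Every element of `𝐈ℕ∞` is a translation `n ↦ n + k` on its domain, so it maps the tail of its
domain starting at `n` onto a tail of ℕ. Hence restricting to tails of domains commutes with
composition: `𝔥` is a homomorphism, and its kernel is a congruence. In a group every idempotent
is the identity, so a group congruence identifies all idempotents of `𝐈ℕ∞`; but `𝔥` separates
the identity from the partial identity of `ℕ \ {1}`.
-/

/-- `DefinedFrom η n` says `n ≥ n_η^d` in the paper's notation. -/
def DefinedFrom (f : PMapN) (n : ℕ+) : Prop := ∀ m : ℕ+, n ≤ m → f m ≠ none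

lemma exists_definedFrom {f : PMapN} (hf : (pdom f)ᶜ.Finite) : ∃ n, DefinedFrom f n := by
  obtain ⟨B, hB⟩ := hf.bddAbove
  refine ⟨B + 1, fun m hm hfm => ?_⟩
  have hmB : m ≤ B := hB (by simpa [pdom] using hfm)
  exact absurd hm (not_le.2 (Order.lt_add_one_iff.2 hmB))

lemma sInf_le_iff_definedFrom {f : PMapN} (hf : (pdom f)ᶜ.Finite) (n : ℕ+) :
    sInf {N : ℕ | ∀ m : ℕ+, N ≤ (m : ℕ) → f m ≠ none} ≤ (n : ℕ) ↔ DefinedFrom f n := by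
  refine ⟨fun h m hnm => ?_, fun h => Nat.sInf_le fun m hm => h m hm⟩
  obtain ⟨n₀, hn₀⟩ := exists_definedFrom hf
  have hne : {N : ℕ | ∀ m : ℕ+, N ≤ (m : ℕ) → f m ≠ none}.Nonempty := ⟨n₀, fun m hm => hn₀ m hm⟩
  exact Nat.sInf_mem hne m (h.trans hnm)

lemma hmap_apply_of_definedFrom {f : PMapN} (hf : (pdom f)ᶜ.Finite) {n : ℕ+}
    (h : DefinedFrom f n) : hmap f n = f n :=
  if_pos ((sInf_le_iff_definedFrom hf n).2 h)

lemma hmap_apply_of_not_definedFrom {f : PMapN} (hf : (pdom f)ᶜ.Finite) {n : ℕ+}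
    (h : ¬ DefinedFrom f n) : hmap f n = none :=
  if_neg (mt (sInf_le_iff_definedFrom hf n).1 h)

lemma hmap_apply_eq_none {f : PMapN} {n : ℕ+} (h : f n = none) : hmap f n = none := by
  simp [hmap, h]

def IsTranslationBy (f : PMapN) (k : ℤ) : Prop :=
  ∀ ⦃m a : ℕ+⦄, f m = some a → ((a : ℕ) : ℤ) = ((m : ℕ) : ℤ) + k

/-- A partial isometry of ℕ with cofinite domain cannot reflect: comparing with a point `Q` far
out in the tail of the domain forces the sign of every displacement. -/
lemma IsIsometry.exists_isTranslationBy {f : PMapN} (hiso : IsIsometry f)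
    (hf : (pdom f)ᶜ.Finite) : ∃ k, IsTranslationBy f k := by
  obtain ⟨p, hp⟩ := exists_definedFrom hf
  obtain ⟨q, hpq⟩ := Option.ne_none_iff_exists'.1 (hp p le_rfl)
  refine ⟨((q : ℕ) : ℤ) - ((p : ℕ) : ℤ), fun m a hma => ?_⟩
  set Q : ℕ+ := p + m + a + q
  have hQ : (Q : ℕ) = p + m + a + q := rfl
  obtain ⟨b, hQb⟩ := Option.ne_none_iff_exists'.1 (hp Q (show (p : ℕ) ≤ Q by omega))
  have ha := a.pos
  have hb := b.pos
  rcases abs_eq_abs.1 (hiso hQb hpq) with h₁ | h₁ <;>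
    rcases abs_eq_abs.1 (hiso hma hQb) with h₂ | h₂ <;> omega

lemma IsTranslationBy.le_of_le {g : PMapN} {k : ℤ} (hg : IsTranslationBy g k) {n m a b : ℕ+}
    (ha : g n = some a) (hb : g m = some b) (h : n ≤ m) : a ≤ b := by
  have hna := hg ha
  have hmb := hg hb
  have hnm : (n : ℕ) ≤ m := h
  show (a : ℕ) ≤ b
  omega

lemma IsTranslationBy.exists_apply_eq {g : PMapN} {k : ℤ} (hg : IsTranslationBy g k) {n a : ℕ+}
    (hn : DefinedFrom g n) (ha : g n = some a) {a' : ℕ+} (h : a ≤ a') :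
    ∃ m, n ≤ m ∧ g m = some a' := by
  have h' : (a : ℕ) ≤ a' := h
  let m : ℕ+ := ⟨n + (a' - a), by positivity⟩
  have hnm : n ≤ m := show (n : ℕ) ≤ n + (a' - a) by omega
  obtain ⟨b, hb⟩ := Option.ne_none_iff_exists'.1 (hn m hnm)
  refine ⟨m, hnm, hb.trans (congrArg some (PNat.coe_injective ?_))⟩
  have hna := hg ha
  have hmb := hg hb
  simp only [m, PNat.mk_coe] at hmb
  omega

lemma DefinedFrom.of_pmul {f g : PMapN} {n : ℕ+} (h : DefinedFrom (pmul f g) n) :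
    DefinedFrom g n :=
  fun m hm hgm => h m hm (by simp [pmul, hgm])

lemma definedFrom_pmul_iff {f g : PMapN} {k : ℤ} (hg : IsTranslationBy g k) {n a : ℕ+}
    (ha : g n = some a) : DefinedFrom (pmul f g) n ↔ DefinedFrom g n ∧ DefinedFrom f a := by
  refine ⟨fun h => ⟨h.of_pmul, fun a' haa' hfa' => ?_⟩, fun ⟨hgn, hfa⟩ m hnm => ?_⟩
  · obtain ⟨m, hnm, hgm⟩ := hg.exists_apply_eq h.of_pmul ha haa'
    exact h m hnm (by simp [pmul, hgm, hfa'])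
  · obtain ⟨b, hb⟩ := Option.ne_none_iff_exists'.1 (hgn m hnm)
    simpa [pmul, hb] using hfa b (hg.le_of_le ha hb hnm)

lemma pdom_pmul_compl_finite {f g : PMapN} (hf : (pdom f)ᶜ.Finite) (hg : (pdom g)ᶜ.Finite)
    (hinj : IsPartialBij g) : (pdom (pmul f g))ᶜ.Finite := by
  refine (hg.union ((hf.image some).preimage (f := g) fun m hm m' _ hmm' => ?_)).subset
    fun m hm => ?_
  · obtain ⟨a, -, ha⟩ := hm
    exact hinj ha.symm (hmm' ▸ ha.symm)
  · rcases hgm : g m with _ | a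
    · exact Or.inl (by simp [pdom, hgm])
    · refine Or.inr ⟨a, ?_, hgm.symm⟩
      simpa [pdom, pmul, hgm] using hm

theorem hmap_pmul {f g : PMapN} (hf : InIN f) (hg : InIN g) :
    hmap (pmul f g) = pmul (hmap f) (hmap g) := by
  obtain ⟨k, hk⟩ := hg.2.2.2.exists_isTranslationBy hg.2.1
  have hfg := pdom_pmul_compl_finite hf.2.1 hg.2.1 hg.1
  funext n
  by_cases hgn : DefinedFrom g n
  · obtain ⟨a, ha⟩ := Option.ne_none_iff_exists'.1 (hgn n le_rfl)
    have hmap_g : hmap g n = some a := (hmap_apply_of_definedFrom hg.2.1 hgn).trans ha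
    by_cases hfa : DefinedFrom f a
    · rw [hmap_apply_of_definedFrom hfg ((definedFrom_pmul_iff hk ha).2 ⟨hgn, hfa⟩)]
      simp [pmul, ha, hmap_g, hmap_apply_of_definedFrom hf.2.1 hfa]
    · rw [hmap_apply_of_not_definedFrom hfg fun h => hfa ((definedFrom_pmul_iff hk ha).1 h).2]
      simp [pmul, hmap_g, hmap_apply_of_not_definedFrom hf.2.1 hfa]
  · rw [hmap_apply_of_not_definedFrom hfg fun h => hgn h.of_pmul]
    simp [pmul, hmap_apply_of_not_definedFrom hg.2.1 hgn]

theorem isCongr_ker_hmap : IsCongr (fun η μ => hmap η = hmap μ) :=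
  ⟨fun _ _ => rfl, fun _ _ _ _ => Eq.symm, fun _ _ _ _ _ _ => Eq.trans,
    fun f g c hf hg hc (h : hmap f = hmap g) =>
      ⟨show hmap _ = hmap _ by rw [hmap_pmul hc hf, hmap_pmul hc hg, h],
        show hmap _ = hmap _ by rw [hmap_pmul hf hc, hmap_pmul hg hc, h]⟩⟩

lemma IsGroupCongr.rel_of_idempotent {r : PMapN → PMapN → Prop} (hr : IsGroupCongr r)
    {e e' : PMapN} (he : InIN e) (hee : pmul e e = e) (he' : InIN e') (hee' : pmul e' e' = e') :
    r e e' := by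
  obtain ⟨-, G, _, φ, hmul, -, hker⟩ := hr
  have φ_idem : ∀ e, InIN e → pmul e e = e → φ e = 1 := fun e he hee =>
    mul_eq_left.1 (by rw [← hmul e e he he, hee])
  exact (hker e e' he he').2 ((φ_idem e he hee).trans (φ_idem e' he' hee').symm)

def pidOff (t : Finset ℕ+) : PMapN := fun n => if n ∈ t then none else some n

lemma pidOff_eq_some {t : Finset ℕ+} {m a : ℕ+} :
    pidOff t m = some a ↔ m ∉ t ∧ m = a := by
  unfold pidOff
  split_ifs <;> simp [*]

lemma inIN_pidOff (t : Finset ℕ+) : InIN (pidOff t) := by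
  refine ⟨fun m n a hm hn => ?_, ?_, ?_, fun m n a b hm hn => ?_⟩
  · exact (pidOff_eq_some.1 hm).2.trans (pidOff_eq_some.1 hn).2.symm
  · exact t.finite_toSet.subset fun m hm => by simpa [pdom, pidOff] using hm
  · exact t.finite_toSet.subset fun m hm => by
      by_contra h
      exact hm ⟨m, by simpa [pidOff] using h⟩
  · rw [(pidOff_eq_some.1 hm).2, (pidOff_eq_some.1 hn).2]

lemma pmul_pidOff_self (t : Finset ℕ+) : pmul (pidOff t) (pidOff t) = pidOff t := by
  funext n
  by_cases hn : n ∈ t <;> simp [pmul, pidOff, hn]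

/-- The kernel `{(η, μ) : 𝔥(η) = 𝔥(μ)}` of the retraction
`𝔥 : 𝐈ℕ∞ → 𝒞_ℕ` (sending `η` to its restriction to the tail `{n : n ≥ n_η^d}`) is a
congruence on `𝐈ℕ∞` which is not a group congruence. -/
theorem stmt16 :
    IsCongr (fun η μ => hmap η = hmap μ) ∧
    ¬ IsGroupCongr (fun η μ => hmap η = hmap μ) := by
  refine ⟨isCongr_ker_hmap, fun hgrp => ?_⟩
  have hidem : hmap (pidOff {1}) = hmap (pidOff ∅) :=
    hgrp.rel_of_idempotent (inIN_pidOff _) (pmul_pidOff_self _) (inIN_pidOff _)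
      (pmul_pidOff_self _)
  have hone := congrFun hidem 1
  rw [hmap_apply_eq_none (by simp [pidOff]),
    hmap_apply_of_definedFrom (inIN_pidOff ∅).2.1 fun m _ => by simp [pidOff]] at hone
  simp [pidOff] at hone
end
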